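/- (Lemma: RSC condition.) Let Θ* be a real symmetric positive definite p×p matrix satisfying the Restricted Fisher Eigenvalue condition with constant κ*_min > 0 relative to the structural error sets C(E) and C(U), and let M > 2. Then for every Δ ∈ C(E) ∪ C(U) with ‖Δ‖_{F*}² ≤ 1/(2M²), the restricted strong convexity bound δL(Δ; Θ*) ≥ κ_L · ‖Δ‖_F² holds with curvature parameter κ_L := ((M−2)/(2(M−1))) κ*_min and zero tolerance, where δL(Δ; Θ*) := Tr(Θ*⁻¹Δ) − log det(Θ* + Δ) + log det(Θ*). -/

import Mathlib

open Matrix Kronecker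

/-- Squared Frobenius norm of a real matrix. -/
def frobSq {p : ℕ} (A : Matrix (Fin p) (Fin p) ℝ) : ℝ := ∑ i, ∑ j, (A i j) ^ 2

/-- Frobenius norm of a real matrix. -/
noncomputable def frobNorm {p : ℕ} (A : Matrix (Fin p) (Fin p) ℝ) : ℝ := Real.sqrt (frobSq A)

/-- Entrywise ℓ1 norm of a real matrix. -/
def l1Norm {p : ℕ} (A : Matrix (Fin p) (Fin p) ℝ) : ℝ := ∑ i, ∑ j, |A i j|

/-- Entrywise maximum (ℓ∞) norm of a real matrix. -/
noncomputable def linfNorm {p : ℕ} (A : Matrix (Fin p) (Fin p) ℝ) : ℝ := ⨆ i, ⨆ j, |A i j|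

/-- The (unordered) singular values of a square real matrix: the square roots of the
eigenvalues of `Aᵀ A`. -/
noncomputable def sval {m : Type*} [Fintype m] [DecidableEq m] (A : Matrix m m ℝ) : m → ℝ :=
  fun i => Real.sqrt ((Matrix.isHermitian_conjTranspose_mul_self A).eigenvalues i)

/-- Nuclear norm: the sum of the singular values. -/
noncomputable def nuclearNorm {m : Type*} [Fintype m] [DecidableEq m] (A : Matrix m m ℝ) : ℝ :=
  ∑ i, sval A i

/-- Spectral norm: the maximum singular value. -/
noncomputable def specNorm {m : Type*} [Fintype m] [DecidableEq m] (A : Matrix m m ℝ) : ℝ :=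
  ⨆ i, sval A i

/-- Squared Fisher norm `‖Δ‖_{F*}² := Tr (Θ⁻¹ Δ Θ⁻¹ Δ)`. -/
noncomputable def fisherSq {p : ℕ} (Θ Δ : Matrix (Fin p) (Fin p) ℝ) : ℝ :=
  Matrix.trace (Θ⁻¹ * Δ * Θ⁻¹ * Δ)

/-- Fisher norm `‖Δ‖_{F*}`. -/
noncomputable def fisherNorm {p : ℕ} (Θ Δ : Matrix (Fin p) (Fin p) ℝ) : ℝ :=
  Real.sqrt (fisherSq Θ Δ)

/-- Fisher inner product `⟨Δ_A, Δ_B⟩_{F*} := Tr (Θ⁻¹ Δ_A Θ⁻¹ Δ_B)`. -/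
noncomputable def fisherInner {p : ℕ} (Θ ΔA ΔB : Matrix (Fin p) (Fin p) ℝ) : ℝ :=
  Matrix.trace (Θ⁻¹ * ΔA * Θ⁻¹ * ΔB)

/-- Restriction of a matrix to an index set `E` (zero outside `E`). -/
def restrict {p : ℕ} (E : Finset (Fin p × Fin p)) (A : Matrix (Fin p) (Fin p) ℝ) :
    Matrix (Fin p) (Fin p) ℝ :=
  Matrix.of fun i j => if (i, j) ∈ E then A i j else 0

/-- Structural error set `C(E)` for the sparse component, centered at `S*`. -/
def CE {p : ℕ} (E : Finset (Fin p × Fin p)) (Sstar : Matrix (Fin p) (Fin p) ℝ) :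
    Set (Matrix (Fin p) (Fin p) ℝ) :=
  {Δ | Δ.IsSymm ∧
    l1Norm (restrict Eᶜ Δ) ≤ 3 * l1Norm (restrict E Δ) + 4 * l1Norm (restrict Eᶜ Sstar)}

/-- Structural error set `C(U)` for the low-rank component, centered at `L*`;
`Pperp` is the orthogonal projection matrix onto `U^⊥`. -/
noncomputable def CU {p : ℕ} (Pperp Lstar : Matrix (Fin p) (Fin p) ℝ) :
    Set (Matrix (Fin p) (Fin p) ℝ) :=
  {Δ | Δ.IsSymm ∧
    nuclearNorm (Pperp * Δ * Pperp) ≤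
      3 * nuclearNorm (Δ - Pperp * Δ * Pperp) + 4 * nuclearNorm (Pperp * Lstar * Pperp)}

/-- `P` is an orthogonal projection matrix. -/
def IsOrthProj {p : ℕ} (P : Matrix (Fin p) (Fin p) ℝ) : Prop := P.IsSymm ∧ P * P = P

/-- Restricted Fisher Eigenvalue condition with constant `κ`. -/
noncomputable def RFE {p : ℕ} (Θ : Matrix (Fin p) (Fin p) ℝ) (E : Finset (Fin p × Fin p))
    (Sstar Pperp Lstar : Matrix (Fin p) (Fin p) ℝ) (κ : ℝ) : Prop :=
  ∀ Δ ∈ CE E Sstar ∪ CU Pperp Lstar, fisherSq Θ Δ ≥ κ * frobSq Δ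

/-- Structural Fisher Incoherence condition with parameters `(λ, μ, s, r, M)` and RFE
constant `κ`: the Fisher information `F* = Θ⁻¹ ⊗ Θ⁻¹`, viewed as an operator on vectorized
`p × p` matrices, composed with the projections onto (the subspaces associated with)
`E`, `E^c`, `U`, `U^⊥`, has maximum singular value at most `κ / (c₁ Λ²)`. -/
noncomputable def SFI {p : ℕ} (Θ : Matrix (Fin p) (Fin p) ℝ) (E : Finset (Fin p × Fin p))
    (Pperp : Matrix (Fin p) (Fin p) ℝ) (lam mu : ℝ) (s r : ℕ) (M κ : ℝ) : Prop :=
  let F : Matrix (Fin p × Fin p) (Fin p × Fin p) ℝ := Θ⁻¹ ⊗ₖ Θ⁻¹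
  let PE : Matrix (Fin p × Fin p) (Fin p × Fin p) ℝ :=
    Matrix.diagonal (fun q => if q ∈ E then (1 : ℝ) else 0)
  let PEperp : Matrix (Fin p × Fin p) (Fin p × Fin p) ℝ := 1 - PE
  let PUperp : Matrix (Fin p × Fin p) (Fin p × Fin p) ℝ := Pperp ⊗ₖ Pperp
  let PU : Matrix (Fin p × Fin p) (Fin p × Fin p) ℝ := 1 - PUperp
  let Λ : ℝ := 2 + 3 * max (lam * Real.sqrt s / (mu * Real.sqrt r))
    (mu * Real.sqrt r / (lam * Real.sqrt s))
  let c₁ : ℝ := 16 * M / (M - 6)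
  specNorm (PE * F * PU) ≤ κ / (c₁ * Λ ^ 2) ∧
    specNorm (PEperp * F * PU) ≤ κ / (c₁ * Λ ^ 2) ∧
    specNorm (PE * F * PUperp) ≤ κ / (c₁ * Λ ^ 2) ∧
    specNorm (PEperp * F * PUperp) ≤ κ / (c₁ * Λ ^ 2)

/-!
Whiten `Δ` by writing `Θ⁻¹ = Bᴴ B` and let `μ` be the eigenvalues of `W = B Δ Bᴴ`. Then
`Tr (Θ⁻¹ Δ) = ∑ μᵢ`, `‖Δ‖_{F*}² = ∑ μᵢ²` and `det (Θ + Δ) = det Θ ∏ (1 + μᵢ)`, so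
`δL(Δ; Θ) = ∑ (μᵢ - log (1 + μᵢ))`. Each `μᵢ² ≤ ‖Δ‖_{F*}² ≤ 1 / (2 M²)` gives `|μᵢ| ≤ 1 / M`, and
on `(-1, 1 / M]` the scalar bound `x - log (1 + x) ≥ x² / (2 (1 + 1 / M))` dominates
`(M - 2) / (2 (M - 1)) x²`. Summing and applying the RFE condition finishes the proof.
-/

open Real

lemma sq_div_le_sub_log_one_add {a x : ℝ} (ha : 0 ≤ a) (hx : -1 < x) (hxa : x ≤ a) :
    x ^ 2 / (2 * (1 + a)) ≤ x - log (1 + x) := by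
  set g : ℝ → ℝ := fun y => y - log (1 + y) - y ^ 2 / (2 * (1 + a))
  -- `g' y` has the sign of `y` on `(-1, a]`, so `g` attains its minimum `0` there at `0`.
  set g' : ℝ → ℝ := fun y => y * (a - y) / ((1 + y) * (1 + a))
  have hg : ∀ y, -1 < y → HasDerivAt g (g' y) y := by
    intro y hy
    have hlog := ((hasDerivAt_id' y).const_add 1).log (by linarith)
    refine (((hasDerivAt_id' y).sub hlog).sub
      ((hasDerivAt_pow 2 y).div_const (2 * (1 + a)))).congr_deriv ?_
    simp only [g']
    field_simp [show 1 + y ≠ 0 by linarith]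
    ring
  have hcont : ContinuousOn g (Set.Ioi (-1)) :=
    fun y hy => (hg y hy).continuousAt.continuousWithinAt
  have hg0 : g 0 = 0 := by simp [g]
  suffices 0 ≤ g x by simp only [g] at this; linarith
  rcases le_total 0 x with hx0 | hx0
  · have hmono : MonotoneOn g (Set.Icc 0 a) := by
      refine monotoneOn_of_hasDerivWithinAt_nonneg (convex_Icc 0 a)
        (hcont.mono fun y hy => by simp at hy ⊢; linarith)
        (fun y hy => (hg y (by simp at hy; linarith)).hasDerivWithinAt) fun y hy => ?_
      simp only [interior_Icc, Set.mem_Ioo] at hy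
      have : 0 < 1 + y := by linarith
      exact div_nonneg (mul_nonneg hy.1.le (by linarith)) (by positivity)
    simpa [hg0] using hmono ⟨le_rfl, ha⟩ ⟨hx0, hxa⟩ hx0
  · have hanti : AntitoneOn g (Set.Ioc (-1) 0) := by
      refine antitoneOn_of_hasDerivWithinAt_nonpos (convex_Ioc (-1) 0)
        (hcont.mono Set.Ioc_subset_Ioi_self)
        (fun y hy => (hg y (by simp at hy; linarith)).hasDerivWithinAt) fun y hy => ?_
      simp only [interior_Ioc, Set.mem_Ioo] at hy
      have : 0 < 1 + y := by linarith
      exact div_nonpos_of_nonpos_of_nonneg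
        (mul_nonpos_of_nonpos_of_nonneg hy.2.le (by linarith)) (by positivity)
    simpa [hg0] using hanti ⟨hx, hx0⟩ ⟨by norm_num, le_rfl⟩ hx0

lemma mul_sq_le_sub_log_one_add {M x : ℝ} (hM : 2 < M) (hx : x ^ 2 ≤ 1 / (2 * M ^ 2)) :
    (M - 2) / (2 * (M - 1)) * x ^ 2 ≤ x - log (1 + x) := by
  have hM0 : 0 < M := by linarith
  have hxM : -(1 / M) ≤ x ∧ x ≤ 1 / M := by
    refine abs_le_of_sq_le_sq' (hx.trans ?_) (by positivity)
    rw [div_pow, one_pow]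
    gcongr
    linarith [sq_nonneg M]
  have hcoef : (M - 2) / (2 * (M - 1)) ≤ 1 / (2 * (1 + 1 / M)) := by
    rw [div_le_div_iff₀ (by linarith) (by positivity)]
    field_simp
    nlinarith
  calc (M - 2) / (2 * (M - 1)) * x ^ 2 ≤ 1 / (2 * (1 + 1 / M)) * x ^ 2 := by gcongr
    _ = x ^ 2 / (2 * (1 + 1 / M)) := by ring
    _ ≤ x - log (1 + x) := by
      refine sq_div_le_sub_log_one_add (by positivity) ?_ hxM.2
      have : 1 / M < 1 := (div_lt_one hM0).mpr (by linarith)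
      linarith [hxM.1]

namespace Matrix.IsHermitian

variable {n 𝕜 : Type*} [Fintype n] [DecidableEq n] [RCLike 𝕜] {A : Matrix n n 𝕜}

lemma trace_cfc (hA : A.IsHermitian) (f : ℝ → ℝ) :
    (cfc f A).trace = ∑ i, (f (hA.eigenvalues i) : 𝕜) := by
  rw [hA.cfc_eq, IsHermitian.cfc, Unitary.conjStarAlgAut_apply, trace_mul_cycle,
    Unitary.coe_star_mul_self, one_mul, trace_diagonal]
  rfl

lemma det_cfc (hA : A.IsHermitian) (f : ℝ → ℝ) :
    (cfc f A).det = ∏ i, (f (hA.eigenvalues i) : 𝕜) := by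
  rw [hA.cfc_eq, IsHermitian.cfc, Unitary.conjStarAlgAut_apply, det_mul, det_mul, mul_comm,
    ← mul_assoc, ← det_mul, Unitary.coe_star_mul_self, det_one, one_mul, det_diagonal]
  rfl

lemma trace_mul_self (hA : A.IsHermitian) :
    (A * A).trace = ∑ i, (hA.eigenvalues i : 𝕜) ^ 2 := by
  have h := hA.trace_cfc (· ^ 2)
  rw [cfc_pow_id A 2 hA.isSelfAdjoint] at h
  simpa [sq] using h

lemma det_one_add (hA : A.IsHermitian) :
    (1 + A).det = ∏ i, (1 + hA.eigenvalues i : 𝕜) := by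
  have h := hA.det_cfc (1 + ·)
  rw [cfc_const_add 1 (fun x => x) A, cfc_id' ℝ A, Algebra.algebraMap_eq_smul_one,
    one_smul] at h
  simpa using h

end Matrix.IsHermitian

open scoped MatrixOrder in
theorem Matrix.PosDef.exists_relative_eigenvalues {n : Type*} [Fintype n] [DecidableEq n]
    {Θ Δ : Matrix n n ℝ} (hΘ : Θ.PosDef) (hΔ : Δ.IsHermitian) :
    ∃ μ : n → ℝ, (Θ⁻¹ * Δ).trace = ∑ i, μ i ∧ (Θ⁻¹ * Δ * Θ⁻¹ * Δ).trace = ∑ i, μ i ^ 2 ∧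
      (Θ + Δ).det = Θ.det * ∏ i, (1 + μ i) := by
  obtain ⟨B, hB⟩ := CStarAlgebra.nonneg_iff_eq_star_mul_self.mp hΘ.inv.posSemidef.nonneg
  rw [star_eq_conjTranspose] at hB
  have hW : (B * Δ * Bᴴ).IsHermitian := isHermitian_mul_mul_conjTranspose B hΔ
  refine ⟨hW.eigenvalues, ?_, ?_, ?_⟩
  · rw [hB, mul_assoc, trace_mul_comm, hW.trace_eq_sum_eigenvalues]
    rfl
  · have hcycle : (Bᴴ * B * Δ * (Bᴴ * B) * Δ).trace
        = (B * Δ * Bᴴ * (B * Δ * Bᴴ)).trace := by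
      rw [mul_assoc, mul_assoc, mul_assoc, trace_mul_comm]
      simp only [mul_assoc]
    rw [hB, hcycle, hW.trace_mul_self]
    rfl
  · have hfactor : Θ + Δ = Θ * (1 + Bᴴ * (B * Δ)) := by
      rw [← mul_assoc Bᴴ, ← hB, mul_add, mul_one, ← mul_assoc,
        mul_nonsing_inv _ ((isUnit_iff_isUnit_det Θ).mp hΘ.isUnit), one_mul]
    rw [hfactor, det_mul, det_one_add_mul_comm, hW.det_one_add]
    rfl

theorem stmt_8_general (p : ℕ) (Θ Sstar Lstar Pperp : Matrix (Fin p) (Fin p) ℝ)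
    (hΘ : Θ.PosDef)
    (E : Finset (Fin p × Fin p))
    (κ : ℝ) (hRFE : RFE Θ E Sstar Pperp Lstar κ)
    (M : ℝ) (hM : 2 < M) :
    ∀ Δ ∈ CE E Sstar ∪ CU Pperp Lstar, fisherSq Θ Δ ≤ 1 / (2 * M ^ 2) →
      Matrix.trace (Θ⁻¹ * Δ) - Real.log ((Θ + Δ).det) + Real.log Θ.det ≥
        ((M - 2) / (2 * (M - 1))) * κ * frobSq Δ := by
  intro Δ hΔ hfisher
  have hΔherm : Δ.IsHermitian := by
    rcases hΔ with h | h <;> exact h.1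
  obtain ⟨μ, htrace, hsq, hdet⟩ := hΘ.exists_relative_eigenvalues hΔherm
  have hfisherSq : fisherSq Θ Δ = ∑ i, μ i ^ 2 := hsq
  rw [hfisherSq] at hfisher
  have hμ : ∀ i, μ i ^ 2 ≤ 1 / (2 * M ^ 2) := fun i =>
    (Finset.single_le_sum (fun j _ => sq_nonneg (μ j)) (Finset.mem_univ i)).trans hfisher
  have hμpos : ∀ i, 0 < 1 + μ i := fun i => by
    have : 1 / (2 * M ^ 2) < 1 := by rw [div_lt_one (by positivity)]; nlinarith
    nlinarith [hμ i]
  have hlogdet : log (Θ + Δ).det = log Θ.det + ∑ i, log (1 + μ i) := by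
    rw [hdet, log_mul hΘ.det_pos.ne' (Finset.prod_pos fun i _ => hμpos i).ne',
      log_prod fun i _ => (hμpos i).ne']
  calc (M - 2) / (2 * (M - 1)) * κ * frobSq Δ
      ≤ (M - 2) / (2 * (M - 1)) * fisherSq Θ Δ := by
        rw [mul_assoc]
        exact mul_le_mul_of_nonneg_left (hRFE Δ hΔ) (div_nonneg (by linarith) (by linarith))
    _ = ∑ i, (M - 2) / (2 * (M - 1)) * μ i ^ 2 := by rw [hfisherSq, Finset.mul_sum]
    _ ≤ ∑ i, (μ i - log (1 + μ i)) :=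
        Finset.sum_le_sum fun i _ => mul_sq_le_sub_log_one_add hM (hμ i)
    _ = _ := by rw [Finset.sum_sub_distrib, htrace, hlogdet]; ring

/-- **RSC condition.** If `Θ*` satisfies the Restricted Fisher Eigenvalue
condition with constant `κ*_min > 0` relative to `C(E)` and `C(U)`, and `M > 2`, then for
every `Δ ∈ C(E) ∪ C(U)` with `‖Δ‖_{F*}² ≤ 1/(2M²)`, the first-order Taylor remainder of
the Gaussian negative log-likelihood satisfies
`δL(Δ; Θ*) ≥ ((M-2)/(2(M-1))) κ*_min ‖Δ‖_F²`. -/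
theorem stmt_8 (p : ℕ) (Θ Sstar Lstar Pperp : Matrix (Fin p) (Fin p) ℝ)
    (hΘsymm : Θ.IsSymm) (hΘ : Θ.PosDef) (hSstar : Sstar.IsSymm) (hLstar : Lstar.IsSymm)
    (E : Finset (Fin p × Fin p)) (hP : IsOrthProj Pperp)
    (κ : ℝ) (hκ : 0 < κ) (hRFE : RFE Θ E Sstar Pperp Lstar κ)
    (M : ℝ) (hM : 2 < M) :
    ∀ Δ ∈ CE E Sstar ∪ CU Pperp Lstar, fisherSq Θ Δ ≤ 1 / (2 * M ^ 2) →
      Matrix.trace (Θ⁻¹ * Δ) - Real.log ((Θ + Δ).det) + Real.log Θ.det ≥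
        ((M - 2) / (2 * (M - 1))) * κ * frobSq Δ :=
  stmt_8_general p Θ Sstar Lstar Pperp hΘ E κ hRFE M hM
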